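/- Let I be a finite set with |I| ≥ 2 and f : I → * the map to a point. Let Tw(I)^{>1} ⊆ Tw(I) be the full subcategory of objects (I → J → K) with |J| > 1, and Tw(I)^f ⊆ Tw(I) the full subcategory of objects with K = * (a singleton). Then: (a) every object of Tw(I) lies in Tw(I)^{>1} or in Tw(I)^f; (b) for every morphism Σ₁ → Σ₂ in Tw(I), if Σ₂ ∈ Tw(I)^f then Σ₁ ∈ Tw(I)^f, and if Σ₂ ∈ Tw(I)^{>1} then Σ₁ ∈ Tw(I)^{>1}. Consequently the square of full inclusions with corners Tw(I)^{>1} ∩ Tw(I)^f, Tw(I)^{>1}, Tw(I)^f, Tw(I) is cocartesian in the category of small categories. -/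

import Mathlib

open CategoryTheory Function Limits

/-- An object of the category `Tw(I)`: a diagram `I ↠ J ↠ K` of surjections of
finite nonempty sets. -/
structure TwObj (I : Type) : Type 1 where
  J : Type
  K : Type
  jFin : Finite J
  kFin : Finite K
  jNe : Nonempty J
  kNe : Nonempty K
  p : I → J
  q : J → K
  hp : Function.Surjective p
  hq : Function.Surjective q

/-- A morphism in `Tw(I)` from `(I → J₁ → K₁)` to `(I → J₂ → K₂)`: a surjection
`J₁ → J₂` under `I` together with a surjection `K₂ → K₁` such that the composite
`J₁ → J₂ → K₂ → K₁` equals `J₁ → K₁`. -/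
structure TwHom {I : Type} (A B : TwObj I) : Type where
  φ : A.J → B.J
  ψ : B.K → A.K
  hφ : Function.Surjective φ
  hψ : Function.Surjective ψ
  hp : ∀ i, φ (A.p i) = B.p i
  hq : ∀ j, ψ (B.q (φ j)) = A.q j

theorem TwHom.ext' {I : Type} {A B : TwObj I} :
    ∀ {f g : TwHom A B}, f.φ = g.φ → f.ψ = g.ψ → f = g
  | ⟨_, _, _, _, _, _⟩, ⟨_, _, _, _, _, _⟩, rfl, rfl => rfl

instance twCategory (I : Type) : Category (TwObj I) where
  Hom A B := TwHom A B
  id A := ⟨_root_.id, _root_.id, Function.surjective_id, Function.surjective_id,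
    fun _ => rfl, fun _ => rfl⟩
  comp := fun f g => ⟨g.φ ∘ f.φ, f.ψ ∘ g.ψ, g.hφ.comp f.hφ, f.hψ.comp g.hψ,
    fun i => by simp only [Function.comp_apply, f.hp, g.hp],
    fun j => by simp only [Function.comp_apply, g.hq, f.hq]⟩
  id_comp := fun f => TwHom.ext' rfl rfl
  comp_id := fun f => TwHom.ext' rfl rfl
  assoc := fun f g h => TwHom.ext' rfl rfl

/-!
Both full subcategories are closed under sources of morphisms (`J₁ ↠ J₂` and `K₂ ↠ K₁`), and
together they contain every object (`K` is a quotient of `J`, so `|J| = 1` forces `K = *`). Hence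
every morphism lies in whichever of the two contains its target, and two functors agreeing on the
intersection glue to a functor on `Tw(I)`: apply the one on `Tw(I)^f` to morphisms with target in
`Tw(I)^f`, and the other one to all remaining morphisms.
-/

universe v u

namespace CategoryTheory.ObjectProperty

variable {C : Type u} [Category.{v} C] {P Q : ObjectProperty C}
  {D : Type*} [Category D] (hcover : ∀ X, P X ∨ Q X)
  (hP : ∀ ⦃X Y : C⦄, (X ⟶ Y) → P Y → P X) (hQ : ∀ ⦃X Y : C⦄, (X ⟶ Y) → Q Y → Q X)
  (F : P.FullSubcategory ⥤ D) (G : Q.FullSubcategory ⥤ D)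
  (w : ιOfLE (P := fun X => P X ∧ Q X) (fun _ h => h.1) ⋙ F = ιOfLE (fun _ h => h.2) ⋙ G)

@[simp]
lemma homMk_id {R : ObjectProperty C} {X : C} (hX : R X) :
    homMk (X := ⟨X, hX⟩) (Y := ⟨X, hX⟩) (𝟙 X) = 𝟙 _ :=
  rfl

lemma homMk_comp {R : ObjectProperty C} {X Y Z : C} {hX : R X} {hY : R Y} {hZ : R Z}
    (f : X ⟶ Y) (g : Y ⟶ Z) :
    homMk (X := ⟨X, hX⟩) (Y := ⟨Z, hZ⟩) (f ≫ g) = homMk (Y := ⟨Y, hY⟩) f ≫ homMk g :=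
  rfl

open Classical in
noncomputable def glueObj (X : C) : D :=
  if h : Q X then G.obj ⟨X, h⟩ else F.obj ⟨X, (hcover X).resolve_right h⟩

lemma glueObj_of_right {X : C} (h : Q X) : glueObj hcover F G X = G.obj ⟨X, h⟩ :=
  dif_pos h

include w in
lemma glueObj_of_left {X : C} (h : P X) : glueObj hcover F G X = F.obj ⟨X, h⟩ := by
  by_cases hX : Q X
  · rw [glueObj_of_right hcover F G hX]
    exact (Functor.congr_obj w ⟨X, h, hX⟩).symm
  · exact dif_neg hX

open Classical in
noncomputable def glueMap {X Y : C} (f : X ⟶ Y) : glueObj hcover F G X ⟶ glueObj hcover F G Y :=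
  if hY : Q Y then
    eqToHom (glueObj_of_right hcover F G (hQ f hY))
      ≫ G.map (X := ⟨X, hQ f hY⟩) (Y := ⟨Y, hY⟩) (homMk f)
      ≫ eqToHom (glueObj_of_right hcover F G hY).symm
  else
    have hY' := (hcover Y).resolve_right hY
    eqToHom (glueObj_of_left hcover F G w (hP f hY'))
      ≫ F.map (X := ⟨X, hP f hY'⟩) (Y := ⟨Y, hY'⟩) (homMk f)
      ≫ eqToHom (glueObj_of_left hcover F G w hY').symm

lemma glueMap_of_right {X Y : C} (f : X ⟶ Y) (hX : Q X) (hY : Q Y) :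
    glueMap hcover hP hQ F G w f = eqToHom (glueObj_of_right hcover F G hX)
      ≫ G.map (X := ⟨X, hX⟩) (Y := ⟨Y, hY⟩) (homMk f)
      ≫ eqToHom (glueObj_of_right hcover F G hY).symm :=
  dif_pos hY

lemma glueMap_of_left {X Y : C} (f : X ⟶ Y) (hX : P X) (hY : P Y) :
    glueMap hcover hP hQ F G w f = eqToHom (glueObj_of_left hcover F G w hX)
      ≫ F.map (X := ⟨X, hX⟩) (Y := ⟨Y, hY⟩) (homMk f)
      ≫ eqToHom (glueObj_of_left hcover F G w hY).symm := by
  by_cases hY' : Q Y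
  · have hw := Functor.congr_hom w (X := ⟨X, hX, hQ f hY'⟩) (Y := ⟨Y, hY, hY'⟩) (homMk f)
    simp only [Functor.comp_map, ιOfLE_map, homMk_hom] at hw
    rw [glueMap_of_right hcover hP hQ F G w f (hQ f hY') hY', hw]
    simp
  · exact dif_neg hY'

noncomputable def glue : C ⥤ D where
  obj := glueObj hcover F G
  map := glueMap hcover hP hQ F G w
  map_id X := by
    rcases hcover X with hX | hX
    · rw [glueMap_of_left hcover hP hQ F G w _ hX hX]
      simp
    · rw [glueMap_of_right hcover hP hQ F G w _ hX hX]
      simp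
  map_comp {X Y Z} f g := by
    by_cases hZ : Q Z
    · have hY := hQ g hZ
      have hX := hQ f hY
      rw [glueMap_of_right hcover hP hQ F G w _ hX hZ, glueMap_of_right hcover hP hQ F G w f hX hY,
        glueMap_of_right hcover hP hQ F G w g hY hZ, homMk_comp (hY := hY)]
      simp
    · have hZ := (hcover Z).resolve_right hZ
      have hY := hP g hZ
      have hX := hP f hY
      rw [glueMap_of_left hcover hP hQ F G w _ hX hZ, glueMap_of_left hcover hP hQ F G w f hX hY,
        glueMap_of_left hcover hP hQ F G w g hY hZ, homMk_comp (hY := hY)]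
      simp

lemma ι_comp_glue_left : P.ι ⋙ glue hcover hP hQ F G w = F :=
  Functor.ext (fun X => glueObj_of_left hcover F G w X.property) fun X Y f =>
    glueMap_of_left hcover hP hQ F G w f.hom X.property Y.property

lemma ι_comp_glue_right : Q.ι ⋙ glue hcover hP hQ F G w = G :=
  Functor.ext (fun X => glueObj_of_right hcover F G X.property) fun X Y f =>
    glueMap_of_right hcover hP hQ F G w f.hom X.property Y.property

include hcover hP hQ in
lemma functor_ext_of_ι_comp_eq {H₁ H₂ : C ⥤ D} (hPH : P.ι ⋙ H₁ = P.ι ⋙ H₂)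
    (hQH : Q.ι ⋙ H₁ = Q.ι ⋙ H₂) : H₁ = H₂ := by
  refine Functor.ext (fun X => (hcover X).elim (fun h => Functor.congr_obj hPH ⟨X, h⟩)
    (fun h => Functor.congr_obj hQH ⟨X, h⟩)) fun X Y f => ?_
  by_cases hY : Q Y
  · exact Functor.congr_hom hQH (X := ⟨X, hQ f hY⟩) (Y := ⟨Y, hY⟩) (homMk f)
  · have hY := (hcover Y).resolve_right hY
    exact Functor.congr_hom hPH (X := ⟨X, hP f hY⟩) (Y := ⟨Y, hY⟩) (homMk f)

include hcover hP hQ in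
theorem isPushout_ι_of_closedUnderSources :
    IsPushout
      (Z := Cat.of (FullSubcategory fun X => P X ∧ Q X)) (X := Cat.of P.FullSubcategory)
      (Y := Cat.of Q.FullSubcategory) (P := Cat.of C)
      (ιOfLE fun _ h => h.1).toCatHom (ιOfLE fun _ h => h.2).toCatHom
      P.ι.toCatHom Q.ι.toCatHom := by
  have comm : (ιOfLE (P := fun X => P X ∧ Q X) (fun _ h => h.1)).toCatHom ≫ P.ι.toCatHom
      = (ιOfLE (P' := Q) fun _ h => h.2).toCatHom ≫ Q.ι.toCatHom := rfl
  refine IsPushout.of_isColimit' ⟨comm⟩ <| PushoutCocone.IsColimit.mk comm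
    (fun s => (glue hcover hP hQ s.inl.toFunctor s.inr.toFunctor
      (congrArg Cat.Hom.toFunctor s.condition)).toCatHom)
    (fun s => Cat.Hom.ext (ι_comp_glue_left ..))
    (fun s => Cat.Hom.ext (ι_comp_glue_right ..))
    (fun s m h₁ h₂ => Cat.Hom.ext (functor_ext_of_ι_comp_eq hcover hP hQ ?_ ?_))
  · exact (congrArg Cat.Hom.toFunctor h₁).trans (ι_comp_glue_left ..).symm
  · exact (congrArg Cat.Hom.toFunctor h₂).trans (ι_comp_glue_right ..).symm

end CategoryTheory.ObjectProperty

namespace TwObj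

variable {I : Type}

lemma one_lt_card_J_or_subsingleton_K (A : TwObj I) : 1 < Nat.card A.J ∨ Subsingleton A.K := by
  have := A.jFin
  have := A.jNe
  refine or_iff_not_imp_left.mpr fun h => ?_
  have : Subsingleton A.J :=
    (Nat.card_eq_one_iff_unique.mp (le_antisymm (not_lt.mp h) Nat.card_pos)).1
  exact A.hq.subsingleton

end TwObj

namespace TwHom

variable {I : Type} {A B : TwObj I}

lemma subsingleton_K (f : TwHom A B) (h : Subsingleton B.K) : Subsingleton A.K :=
  f.hψ.subsingleton

lemma one_lt_card_J (f : TwHom A B) (h : 1 < Nat.card B.J) : 1 < Nat.card A.J :=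
  have := A.jFin
  h.trans_le (Nat.card_le_card_of_surjective f.φ f.hφ)

end TwHom

theorem stmt7_general (I : Type) :
    (∀ A : TwObj I, 1 < Nat.card A.J ∨ Subsingleton A.K) ∧
    (∀ (A B : TwObj I), (A ⟶ B) →
        (Subsingleton B.K → Subsingleton A.K) ∧ (1 < Nat.card B.J → 1 < Nat.card A.J)) ∧
    IsPushout
      (Z := Cat.of (ObjectProperty.FullSubcategory fun A : TwObj I => 1 < Nat.card A.J ∧ Subsingleton A.K))
      (X := Cat.of (ObjectProperty.FullSubcategory fun A : TwObj I => 1 < Nat.card A.J))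
      (Y := Cat.of (ObjectProperty.FullSubcategory fun A : TwObj I => Subsingleton A.K))
      (P := Cat.of (TwObj I))
      (ObjectProperty.ιOfLE fun _ h => h.1).toCatHom
      (ObjectProperty.ιOfLE fun _ h => h.2).toCatHom
      (ObjectProperty.ι fun A : TwObj I => 1 < Nat.card A.J).toCatHom
      (ObjectProperty.ι fun A : TwObj I => Subsingleton A.K).toCatHom :=
  ⟨TwObj.one_lt_card_J_or_subsingleton_K, fun _ _ f => ⟨f.subsingleton_K, f.one_lt_card_J⟩,
    ObjectProperty.isPushout_ι_of_closedUnderSources TwObj.one_lt_card_J_or_subsingleton_K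
      (fun _ _ f => f.one_lt_card_J) fun _ _ f => f.subsingleton_K⟩

/-- For `|I| ≥ 2`: (a) every object of `Tw(I)` lies in `Tw(I)^{>1}` (i.e. `|J| > 1`) or
in `Tw(I)^f` (i.e. `K` is a singleton); (b) both subcategories are closed under taking
the source of a morphism; consequently the square of full inclusions is cocartesian in
the category of small categories. -/
theorem stmt7 (I : Type) [Finite I] (hI : 1 < Nat.card I) :
    (∀ A : TwObj I, 1 < Nat.card A.J ∨ Subsingleton A.K) ∧
    (∀ (A B : TwObj I), (A ⟶ B) →
        (Subsingleton B.K → Subsingleton A.K) ∧ (1 < Nat.card B.J → 1 < Nat.card A.J)) ∧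
    IsPushout
      (Z := Cat.of (ObjectProperty.FullSubcategory fun A : TwObj I => 1 < Nat.card A.J ∧ Subsingleton A.K))
      (X := Cat.of (ObjectProperty.FullSubcategory fun A : TwObj I => 1 < Nat.card A.J))
      (Y := Cat.of (ObjectProperty.FullSubcategory fun A : TwObj I => Subsingleton A.K))
      (P := Cat.of (TwObj I))
      (ObjectProperty.ιOfLE fun _ h => h.1).toCatHom
      (ObjectProperty.ιOfLE fun _ h => h.2).toCatHom
      (ObjectProperty.ι fun A : TwObj I => 1 < Nat.card A.J).toCatHom
      (ObjectProperty.ι fun A : TwObj I => Subsingleton A.K).toCatHom :=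
  stmt7_general I
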